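/- arXiv:1410.2446 — 2 statements merged into one kernel-verified Lean document; each statement's English description precedes it below -/
import Mathlib

section
/- For every integer k ≥ 1 and every a ∈ ℤ, the following identity holds in R: χ(k,a)·χ(1,a+2k) = χ(k+1,a) + χ(k−1,a). -/
/-!
`R` is the Laurent polynomial ring over `ℤ` in countably many commuting variables
`Y n`, `n : ℤ`, realised as the group algebra of the free abelian group `ℤ →₀ ℤ`.
`Y n e` denotes the monomial `(Y_n)^e`.
-/

/-- The Laurent polynomial ring `ℤ[Y_n^{±1} : n ∈ ℤ]`. -/
abbrev R : Type := AddMonoidAlgebra ℤ (ℤ →₀ ℤ)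

/-- The monomial `Y_n^e`. -/
noncomputable def Y (n e : ℤ) : R := AddMonoidAlgebra.single (Finsupp.single n e) 1

/-- The `q`-character of the Kirillov–Reshetikhin module `W^{(1)}_{k,q^a}`:
`χ(k,a) = Σ_{i=0}^{k} (Π_{t=0}^{k−1−i} Y_{a+2t}) · (Π_{t=k+1−i}^{k} Y_{a+2t}^{−1})`. -/
noncomputable def chi (k : ℕ) (a : ℤ) : R :=
  ∑ i ∈ Finset.range (k + 1),
    (∏ t ∈ Finset.range (k - i), Y (a + 2 * (t : ℤ)) 1) *
      ∏ t ∈ Finset.Icc (k + 1 - i) k, Y (a + 2 * (t : ℤ)) (-1)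

/-!
Write `χ(k,a) = Σ_{i ≤ k} m_{k,i}` and `χ(1,a+2k) = Y_{a+2k} + Y_{a+2k+2}⁻¹`. Multiplying by
`Y_{a+2k+2}⁻¹` sends `m_{k,i}` to `m_{k+1,i+1}`, so these products together with `m_{k+1,0}` make up
`χ(k+1,a)`. Multiplying by `Y_{a+2k}` sends `m_{k,0}` to `m_{k+1,0}` and, for `i ≥ 1`, cancels the
last inverse factor `Y_{a+2k}⁻¹` of `m_{k,i}`, leaving `m_{k-1,i-1}`; these make up `χ(k-1,a)`.
-/

noncomputable def chiTerm (k : ℕ) (a : ℤ) (i : ℕ) : R :=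
  (∏ t ∈ Finset.range (k - i), Y (a + 2 * (t : ℤ)) 1) *
    ∏ t ∈ Finset.Icc (k + 1 - i) k, Y (a + 2 * (t : ℤ)) (-1)

lemma chi_eq_sum_chiTerm (k : ℕ) (a : ℤ) :
    chi k a = ∑ i ∈ Finset.range (k + 1), chiTerm k a i := rfl

lemma Y_mul_Y (n e e' : ℤ) : Y n e * Y n e' = Y n (e + e') := by
  simp [Y, AddMonoidAlgebra.single_mul_single, Finsupp.single_add]

lemma Y_zero_right (n : ℤ) : Y n 0 = 1 := by
  simp [Y, AddMonoidAlgebra.one_def]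

lemma chi_one (b : ℤ) : chi 1 b = Y b 1 + Y (b + 2) (-1) := by
  simp [chi, Finset.sum_range_succ]

lemma chiTerm_zero_mul_Y (k : ℕ) (a : ℤ) :
    chiTerm k a 0 * Y (a + 2 * (k : ℤ)) 1 = chiTerm (k + 1) a 0 := by
  simp [chiTerm, Finset.prod_range_succ]

lemma chiTerm_succ_mul_Y {k i : ℕ} (hi : i ≤ k) (a : ℤ) :
    chiTerm (k + 1) a (i + 1) * Y (a + 2 * ((k + 1 : ℕ) : ℤ)) 1 = chiTerm k a i := by
  rw [chiTerm, Nat.add_sub_add_right, Finset.prod_Icc_succ_top (by omega), mul_assoc, mul_assoc,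
    Y_mul_Y, neg_add_cancel, Y_zero_right, mul_one, Nat.add_sub_add_right, chiTerm]

lemma chiTerm_mul_Y_inv (k : ℕ) (a : ℤ) (i : ℕ) :
    chiTerm k a i * Y (a + 2 * (k : ℤ) + 2) (-1) = chiTerm (k + 1) a (i + 1) := by
  have hexp : a + 2 * (k : ℤ) + 2 = a + 2 * ((k + 1 : ℕ) : ℤ) := by push_cast; ring
  simp only [chiTerm, hexp, mul_assoc, Nat.add_sub_add_right]
  rw [← Finset.prod_Icc_succ_top (by omega)]

lemma chi_succ_mul_Y (k : ℕ) (a : ℤ) :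
    chi (k + 1) a * Y (a + 2 * ((k + 1 : ℕ) : ℤ)) 1 = chi k a + chiTerm (k + 2) a 0 := by
  rw [chi_eq_sum_chiTerm, Finset.sum_mul, Finset.sum_range_succ', chiTerm_zero_mul_Y,
    chi_eq_sum_chiTerm]
  congr 1
  refine Finset.sum_congr rfl fun i hi => chiTerm_succ_mul_Y ?_ a
  exact Nat.lt_succ_iff.mp (Finset.mem_range.mp hi)

lemma chi_succ (k : ℕ) (a : ℤ) :
    chi (k + 1) a = chi k a * Y (a + 2 * (k : ℤ) + 2) (-1) + chiTerm (k + 1) a 0 := by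
  simp only [chi_eq_sum_chiTerm, Finset.sum_mul, chiTerm_mul_Y_inv]
  exact Finset.sum_range_succ' _ _

/-- For `k ≥ 1` and `a ∈ ℤ`: `χ(k,a)·χ(1,a+2k) = χ(k+1,a) + χ(k−1,a)`. -/
theorem chi_mul_fundamental (k : ℕ) (hk : 1 ≤ k) (a : ℤ) :
    chi k a * chi 1 (a + 2 * (k : ℤ)) = chi (k + 1) a + chi (k - 1) a := by
  obtain ⟨j, rfl⟩ : ∃ j, k = j + 1 := ⟨k - 1, by omega⟩
  rw [chi_one, mul_add, chi_succ_mul_Y, chi_succ (j + 1), Nat.add_sub_cancel]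
  ring
end

section
/- The identity B·(σ(A)·C − 1) = C³ + C²·Λ₁ + C·Λ₂ + 1 holds in S. (This is the third identity of Proposition 5.3 for j = 1: here σ(A)·C − 1 = χ_ε(L(Y_{1,2}Y_{2,1})), so the identity reads χ_ε(L(Y_{1,0}Y_{2,1}))·χ_ε(L(Y_{1,2}Y_{2,1})) = χ_ε(L(Y_{2,1}))³ + χ_ε(L(Y_{2,1}))²·χ_ε(L(𝐘₁)) + χ_ε(L(Y_{2,1}))·χ_ε(L(𝐘₂)) + 1; it is a generalised exchange relation of type G₂.) -/
/-!
`S = ℤ[Y10^{±1}, Y12^{±1}, Y21^{±1}, Y23^{±1}]` is the Laurent polynomial ring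
over `ℤ` in four commuting variables, realised as the group algebra of the free
abelian group `Fin 4 →₀ ℤ`; the indices `0, 1, 2, 3` correspond to the variables
`Y10, Y12, Y21, Y23` respectively (`Yin = Y_{i,ε^n}`, `ε` a primitive fourth
root of unity; this is the case `g = sl₃`, `l = 2`).
-/

/-- The Laurent polynomial ring `ℤ[Y10^{±1}, Y12^{±1}, Y21^{±1}, Y23^{±1}]`. -/
abbrev S : Type := AddMonoidAlgebra ℤ (Fin 4 →₀ ℤ)

/-- The monomial which is the `e`-th power of the `i`-th variable
(`i = 0, 1, 2, 3` for `Y10, Y12, Y21, Y23`). -/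
noncomputable def Yv (i : Fin 4) (e : ℤ) : S :=
  AddMonoidAlgebra.single (Finsupp.single i e) 1

/-- `A = Y10 + Y21·Y12⁻¹ + Y23⁻¹`, the `ε`-character of `L(Y_{1,0})`. -/
noncomputable def A : S := Yv 0 1 + Yv 2 1 * Yv 1 (-1) + Yv 3 (-1)

/-- `B`, the `ε`-character of `L(Y_{1,0}Y_{2,1})`. -/
noncomputable def B : S :=
  Yv 0 1 * Yv 2 1 + Yv 0 1 * Yv 1 1 * Yv 3 (-1) + Yv 2 1 ^ 2 * Yv 1 (-1) +
    2 * (Yv 2 1 * Yv 3 (-1)) + Yv 2 1 * Yv 0 (-1) * Yv 1 (-1) +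
    Yv 1 1 * Yv 3 (-2) + Yv 0 (-1) * Yv 3 (-1)

/-- `C = Y21 + Y12·Y23⁻¹ + Y10⁻¹`, the `ε`-character of `L(Y_{2,1})`. -/
noncomputable def C : S := Yv 2 1 + Yv 1 1 * Yv 3 (-1) + Yv 0 (-1)

/-- `Λ₁ = Y10·Y12 + Y21·Y23·Y10⁻¹·Y12⁻¹ + Y21⁻¹·Y23⁻¹`, the `ε`-character of `L(𝐘₁)`. -/
noncomputable def Lam1 : S :=
  Yv 0 1 * Yv 1 1 + Yv 2 1 * Yv 3 1 * Yv 0 (-1) * Yv 1 (-1) + Yv 2 (-1) * Yv 3 (-1)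

/-- `Λ₂ = Y21·Y23 + Y10·Y12·Y21⁻¹·Y23⁻¹ + Y10⁻¹·Y12⁻¹`, the `ε`-character of `L(𝐘₂)`. -/
noncomputable def Lam2 : S :=
  Yv 2 1 * Yv 3 1 + Yv 0 1 * Yv 1 1 * Yv 2 (-1) * Yv 3 (-1) + Yv 0 (-1) * Yv 1 (-1)

/-- The ring automorphism `σ` of `S` determined by `σ(Y10)=Y12`, `σ(Y12)=Y10`,
`σ(Y21)=Y23`, `σ(Y23)=Y21` (shift of the spectral parameter by `ε²`). -/
noncomputable def σ : S ≃ₐ[ℤ] S :=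
  AddMonoidAlgebra.domCongr ℤ ℤ
    (Finsupp.domCongr (M := ℤ) ((Equiv.swap (0 : Fin 4) 1).trans (Equiv.swap 2 3)))

/-!
`S` is an integral domain, so it embeds into its field of fractions, where `Yv i (-1)` becomes
the honest inverse of `Yv i 1`. There the identity is one between rational functions in four nonzero
variables, which holds after clearing denominators.
-/

lemma Yv_add (i : Fin 4) (a b : ℤ) : Yv i (a + b) = Yv i a * Yv i b := by
  simp [Yv, AddMonoidAlgebra.single_mul_single, Finsupp.single_add]

lemma Yv_zero (i : Fin 4) : Yv i 0 = 1 := by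
  simp [Yv, AddMonoidAlgebra.one_def]

lemma map_Yv_one_ne_zero {R : Type*} [Semiring R] [Nontrivial R] (f : S →+* R) (i : Fin 4) :
    f (Yv i 1) ≠ 0 := by
  refine left_ne_zero_of_mul_eq_one (b := f (Yv i (-1))) ?_
  rw [← map_mul, ← Yv_add, add_neg_cancel, Yv_zero, map_one]

lemma map_Yv {K : Type*} [DivisionRing K] (f : S →+* K) (i : Fin 4) (n : ℤ) :
    f (Yv i n) = f (Yv i 1) ^ n := by
  have hy := map_Yv_one_ne_zero f i
  induction n using Int.induction_on with
  | zero => rw [Yv_zero, map_one, zpow_zero]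
  | succ n ih => rw [Yv_add, map_mul, ih, zpow_add_one₀ hy]
  | pred n ih =>
    rw [zpow_sub_one₀ hy, ← ih, eq_mul_inv_iff_mul_eq₀ hy, ← map_mul, ← Yv_add, sub_add_cancel]

lemma σ_Yv (i : Fin 4) (n : ℤ) :
    σ (Yv i n) = Yv ((Equiv.swap (0 : Fin 4) 1).trans (Equiv.swap 2 3) i) n := by
  simp [σ, Yv, Finsupp.domCongr_apply]

lemma σ_A : σ A = Yv 1 1 + Yv 3 1 * Yv 0 (-1) + Yv 2 (-1) := by
  simp only [A, map_add, map_mul, σ_Yv]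
  rfl

theorem exchange_G2_field {K : Type*} [Field K] {y₀ y₁ y₂ y₃ b a c l₁ l₂ : K}
    (h₀ : y₀ ≠ 0) (h₁ : y₁ ≠ 0) (h₂ : y₂ ≠ 0) (h₃ : y₃ ≠ 0)
    (hb : b = y₀ * y₂ + y₀ * y₁ * y₃⁻¹ + y₂ ^ 2 * y₁⁻¹ + 2 * (y₂ * y₃⁻¹) + y₂ * y₀⁻¹ * y₁⁻¹ +
      y₁ * (y₃ ^ 2)⁻¹ + y₀⁻¹ * y₃⁻¹)
    (ha : a = y₁ + y₃ * y₀⁻¹ + y₂⁻¹) (hc : c = y₂ + y₁ * y₃⁻¹ + y₀⁻¹)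
    (hl₁ : l₁ = y₀ * y₁ + y₂ * y₃ * y₀⁻¹ * y₁⁻¹ + y₂⁻¹ * y₃⁻¹)
    (hl₂ : l₂ = y₂ * y₃ + y₀ * y₁ * y₂⁻¹ * y₃⁻¹ + y₀⁻¹ * y₁⁻¹) :
    b * (a * c - 1) = c ^ 3 + c ^ 2 * l₁ + c * l₂ + 1 := by
  subst_vars
  field_simp
  ring

lemma map_exchange_G2 {K : Type*} [Field K] (f : S →+* K) :
    f (B * (σ A * C - 1)) = f (C ^ 3 + C ^ 2 * Lam1 + C * Lam2 + 1) := by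
  simp only [map_mul, map_sub, map_add, map_pow, map_one]
  refine exchange_G2_field (map_Yv_one_ne_zero f 0) (map_Yv_one_ne_zero f 1)
    (map_Yv_one_ne_zero f 2) (map_Yv_one_ne_zero f 3) ?_ ?_ ?_ ?_ ?_ <;>
  simp only [B, σ_A, C, Lam1, Lam2, map_add, map_mul, map_pow, map_ofNat, map_Yv f _ (-1),
    map_Yv f _ (-2), zpow_neg, zpow_ofNat, pow_one]

/-- Proposition 5.3, third identity for `j = 1` (generalised exchange relation of
type `G₂`): since `σ(A)·C − 1 = χ_ε(L(Y_{1,2}Y_{2,1}))`, it reads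
`χ_ε(L(Y_{1,0}Y_{2,1}))·χ_ε(L(Y_{1,2}Y_{2,1})) = C³ + C²·Λ₁ + C·Λ₂ + 1`. -/
theorem exchange_G2_j1 : B * (σ A * C - 1) = C ^ 3 + C ^ 2 * Lam1 + C * Lam2 + 1 :=
  IsFractionRing.injective S (FractionRing S) (map_exchange_G2 _)
end
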